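/- Let G and H each be a graph of order at least two, with G connected. If either (i) diam(H) ≤ 2 and sdim_f(H) = |V(H)|/2, or (ii) diam(H) > 2 and sdim_f(K_1 ⊙ H) = |V(H)|/2, then sdim_f(G[H]) = |V(G)|·|V(H)|/2. (In case (i), H is additionally connected so that diam(H) is defined.) -/

import Mathlib

open SimpleGraph

/-- `Sset G x y` is the set `S{x,y}` of vertices `z` such that `x` lies on some shortest
`y`–`z` path or `y` lies on some shortest `x`–`z` path in `G`. -/
def Sset {V : Type*} (G : SimpleGraph V) (x y : V) : Set V :=
  {z | (∃ p : G.Walk y z, p.length = G.dist y z ∧ x ∈ p.support) ∨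
       (∃ p : G.Walk x z, p.length = G.dist x z ∧ y ∈ p.support)}

/-- A strong resolving function of `G`: `g : V → [0,1]` with `g(S{x,y}) ≥ 1` for all
distinct vertices `x, y`. -/
def IsSRF {V : Type*} (G : SimpleGraph V) (g : V → ℝ) : Prop :=
  (∀ v, 0 ≤ g v ∧ g v ≤ 1) ∧ ∀ x y : V, x ≠ y → 1 ≤ ∑ᶠ z ∈ Sset G x y, g z

/-- The fractional strong metric dimension of `G`. -/
noncomputable def sdimf {V : Type*} (G : SimpleGraph V) : ℝ :=
  sInf {s : ℝ | ∃ g : V → ℝ, IsSRF G g ∧ s = ∑ᶠ v, g v}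

/-- A strong resolving set of `G`: every pair of distinct vertices is strongly resolved
by some vertex of `S` (i.e. some vertex of `S` lies in `S{x,y}`). -/
def IsSRSet {V : Type*} (G : SimpleGraph V) (S : Set V) : Prop :=
  ∀ x y : V, x ≠ y → ∃ z ∈ S, z ∈ Sset G x y

/-- The strong metric dimension of `G`: the minimum cardinality of a strong resolving set. -/
noncomputable def sdim {V : Type*} (G : SimpleGraph V) : ℕ :=
  sInf {n : ℕ | ∃ S : Set V, IsSRSet G S ∧ S.ncard = n}

/-- `u` is maximally distant from `v`: `d(u,v) ≥ d(w,v)` for every neighbor `w` of `u`. -/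
def MaxDistFrom {V : Type*} (G : SimpleGraph V) (u v : V) : Prop :=
  ∀ w : V, G.Adj u w → G.dist w v ≤ G.dist u v

/-- `u` and `v` are mutually maximally distant (MMD) in `G`. -/
def MMD {V : Type*} (G : SimpleGraph V) (u v : V) : Prop :=
  u ≠ v ∧ MaxDistFrom G u v ∧ MaxDistFrom G v u

/-- The strong resolving graph of `G` (on the ambient vertex set): `u ~ v` iff `u` MMD `v`. -/
def SRGraph {V : Type*} (G : SimpleGraph V) : SimpleGraph V where
  Adj := MMD G
  symm := ⟨fun _ _ h => ⟨h.1.symm, h.2.2, h.2.1⟩⟩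
  loopless := ⟨fun _ h => h.1 rfl⟩

/-- `M(G)`: the set of vertices that are mutually maximally distant with some vertex. -/
def Mset {V : Type*} (G : SimpleGraph V) : Set V := {x | ∃ y, MMD G x y}

/-- The matching number of `G`. -/
noncomputable def matchNum {V : Type*} (G : SimpleGraph V) : ℕ :=
  sSup {n : ℕ | ∃ M : G.Subgraph, M.IsMatching ∧ M.edgeSet.ncard = n}

/-- The corona product `G ⊙ H`. -/
def corona {V W : Type*} (G : SimpleGraph V) (H : SimpleGraph W) :
    SimpleGraph (V ⊕ V × W) where
  Adj x y :=
    match x, y with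
    | Sum.inl u, Sum.inl u' => G.Adj u u'
    | Sum.inl u, Sum.inr iw => u = iw.1
    | Sum.inr iw, Sum.inl u => iw.1 = u
    | Sum.inr iw, Sum.inr iw' => iw.1 = iw'.1 ∧ H.Adj iw.2 iw'.2
  symm := by
    constructor
    rintro (u | iw) (u' | iw') h
    · exact G.adj_symm h
    · exact h.symm
    · exact h.symm
    · exact ⟨h.1.symm, H.adj_symm h.2⟩
  loopless := by
    constructor
    rintro (u | iw) h
    · exact G.irrefl h
    · exact H.irrefl h.2

/-- `K₁ ⊙ H`: the graph obtained from `H` by adding one new vertex adjacent to every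
vertex of `H`. -/
def cone {W : Type*} (H : SimpleGraph W) : SimpleGraph (Option W) where
  Adj x y :=
    match x, y with
    | none, none => False
    | none, some _ => True
    | some _, none => True
    | some w, some w' => H.Adj w w'
  symm := by
    constructor
    rintro (_ | w) (_ | w') h
    · exact h
    · exact trivial
    · exact trivial
    · exact H.adj_symm h
  loopless := by
    constructor
    rintro (_ | w) h
    · exact h
    · exact H.irrefl h

/-- The lexicographic product `G[H]`. -/
def lexProd {V W : Type*} (G : SimpleGraph V) (H : SimpleGraph W) :
    SimpleGraph (V × W) where
  Adj x y := G.Adj x.1 y.1 ∨ (x.1 = y.1 ∧ H.Adj x.2 y.2)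
  symm := by
    constructor
    rintro x y (h | ⟨h1, h2⟩)
    · exact Or.inl (G.adj_symm h)
    · exact Or.inr ⟨h1.symm, H.adj_symm h2⟩
  loopless := by
    constructor
    rintro x (h | ⟨_, h2⟩)
    · exact G.irrefl h
    · exact H.irrefl h2

/-- `SL{x,y} = (N[x] ∪ N[y]) ∩ S{x,y}`. -/
def SLset {W : Type*} (H : SimpleGraph W) (x y : W) : Set W :=
  (insert x (H.neighborSet x) ∪ insert y (H.neighborSet y)) ∩ Sset H x y

/-- A strong locating function of `H`. -/
def IsSLF {W : Type*} (H : SimpleGraph W) (f : W → ℝ) : Prop :=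
  (∀ v, 0 ≤ f v ∧ f v ≤ 1) ∧ ∀ x y : W, x ≠ y → 1 ≤ ∑ᶠ z ∈ SLset H x y, f z

/-- `sl_f(H)`: the minimum weight of a strong locating function of `H`. -/
noncomputable def slf {W : Type*} (H : SimpleGraph W) : ℝ :=
  sInf {s : ℝ | ∃ f : W → ℝ, IsSLF H f ∧ s = ∑ᶠ v, f v}

/-- `u` has a true twin: some other vertex with the same closed neighborhood. -/
def HasTrueTwin {V : Type*} (G : SimpleGraph V) (u : V) : Prop :=
  ∃ v : V, v ≠ u ∧ insert v (G.neighborSet v) = insert u (G.neighborSet u)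

/-- `u` has a false twin: some other vertex with the same open neighborhood. -/
def HasFalseTwin {V : Type*} (G : SimpleGraph V) (u : V) : Prop :=
  ∃ v : V, v ≠ u ∧ G.neighborSet v = G.neighborSet u

/-- `m₁(G)`: number of vertices in type-1 (singleton) classes of the twin relation. -/
noncomputable def m1 {V : Type*} (G : SimpleGraph V) : ℕ :=
  {u : V | ¬ HasTrueTwin G u ∧ ¬ HasFalseTwin G u}.ncard

/-- `m₂(G)`: number of vertices in type-2 (clique) classes of the twin relation. -/
noncomputable def m2 {V : Type*} (G : SimpleGraph V) : ℕ :=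
  {u : V | HasTrueTwin G u}.ncard

/-- `m₃(G)`: number of vertices in type-3 (independent set) classes of the twin relation. -/
noncomputable def m3 {V : Type*} (G : SimpleGraph V) : ℕ :=
  {u : V | HasFalseTwin G u}.ncard

/-- The strong resolving graph of `G` (whose vertex set is `M(G)`) is Hamiltonian:
there is a cycle in `SRGraph G` passing through every vertex of `M(G)`. -/
def SRHamiltonian {V : Type*} (G : SimpleGraph V) : Prop :=
  ∃ (u : V) (p : (SRGraph G).Walk u u), p.IsCycle ∧ ∀ v ∈ Mset G, v ∈ p.support

/-!
Weight `1/2` on every vertex strongly resolves any connected graph, since `x, y ∈ S{x,y}`;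
this gives the upper bound. For the lower bound fix a copy `{u} × V(H)` of `H` in `G[H]`.
A neighbour of `u` in `G` plays the role of the apex of `K₁ ⊙ H`, so distances inside the copy
are those of `K₁ ⊙ H`, while a vertex `(w, c)` with `w ≠ u` is at distance `d_G(u, w)` from
every vertex of the copy. Hence `S{(u,a),(u,b)}` lies in the copy and is `S{a,b}` computed in
`K₁ ⊙ H`. So a strong resolving function of `G[H]` restricts on each copy to one of `H` when
`diam(H) ≤ 2` (then `K₁ ⊙ H` does not change distances in `H`), and, extended by `0` at the apex,
to one of `K₁ ⊙ H` when `diam(H) > 2` (then every `a` has a non-neighbour `b`, and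
`S{apex, a} ⊇ S{a, b}`). Either way each copy carries weight at least `|V(H)|/2`.
-/

namespace SimpleGraph

variable {V : Type*} {G : SimpleGraph V}

lemma dist_eq_two_of_adj_of_adj {u v w : V} (huw : u ≠ w) (hn : ¬G.Adj u w)
    (huv : G.Adj u v) (hvw : G.Adj v w) : G.dist u w = 2 := by
  have hle : G.dist u w ≤ 2 := by simpa using dist_le (.cons huv (.cons hvw .nil))
  have hlt := (huv.reachable.trans hvw.reachable).one_lt_dist_of_ne_of_not_adj huw hn
  omega

lemma Preconnected.exists_shortest_walk_mem_support_iff (hG : G.Preconnected) {x y z : V} :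
    (∃ p : G.Walk x z, p.length = G.dist x z ∧ y ∈ p.support) ↔
      G.dist x y + G.dist y z = G.dist x z := by
  classical
  constructor
  · rintro ⟨p, hp, hy⟩
    have hsplit := congrArg Walk.length (p.take_spec hy)
    rw [Walk.length_append] at hsplit
    have := dist_le (p.takeUntil y hy)
    have := dist_le (p.dropUntil y hy)
    have := (hG x y).dist_triangle_left z
    omega
  · intro h
    obtain ⟨q, hq⟩ := (hG x y).exists_walk_length_eq_dist
    obtain ⟨r, hr⟩ := (hG y z).exists_walk_length_eq_dist
    exact ⟨q.append r, by rw [Walk.length_append, hq, hr, h], by simp⟩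

end SimpleGraph

open SimpleGraph

lemma finsum_mem_mono_of_nonneg {α M : Type*} [Finite α] [AddCommMonoid M] [PartialOrder M]
    [IsOrderedAddMonoid M] {f : α → M} (hf : 0 ≤ f) {s t : Set α} (hst : s ⊆ t) :
    ∑ᶠ x ∈ s, f x ≤ ∑ᶠ x ∈ t, f x := by
  rw [finsum_mem_def, finsum_mem_def]
  exact finsum_le_finsum' (Set.toFinite _) (Set.toFinite _)
    (Set.indicator_le_indicator_of_subset hst hf)

section Sset

variable {V : Type*} {G : SimpleGraph V}

lemma Sset_comm (x y : V) : Sset G x y = Sset G y x := by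
  ext z; exact or_comm

lemma mem_Sset_iff_dist (hG : G.Preconnected) {x y z : V} :
    z ∈ Sset G x y ↔
      G.dist y x + G.dist x z = G.dist y z ∨ G.dist x y + G.dist y z = G.dist x z :=
  or_congr hG.exists_shortest_walk_mem_support_iff hG.exists_shortest_walk_mem_support_iff

lemma isSRF_const_half [Finite V] (hG : G.Preconnected) : IsSRF G fun _ => (1 / 2 : ℝ) := by
  refine ⟨fun _ => by norm_num, fun x y hxy => ?_⟩
  have hxy_mem : {x, y} ⊆ Sset G x y := by
    rintro z (rfl | rfl) <;> simp [mem_Sset_iff_dist hG, dist_comm]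
  calc (1 : ℝ) = ∑ᶠ z ∈ ({x, y} : Set V), (1 / 2 : ℝ) := by
        rw [finsum_mem_pair hxy]; norm_num
    _ ≤ ∑ᶠ z ∈ Sset G x y, (1 / 2 : ℝ) :=
        finsum_mem_mono_of_nonneg (fun _ => by norm_num) hxy_mem

lemma sdimf_le_finsum {g : V → ℝ} (hg : IsSRF G g) : sdimf G ≤ ∑ᶠ v, g v :=
  csInf_le ⟨0, by rintro s ⟨g, hg, rfl⟩; exact finsum_nonneg fun v => (hg.1 v).1⟩ ⟨g, hg, rfl⟩

end Sset

section Cone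

variable {W : Type*} {H : SimpleGraph W}

lemma cone_adj_none_some (a : W) : (cone H).Adj none (some a) := trivial

lemma cone_preconnected : (cone H).Preconnected := by
  have hnone : ∀ x, (cone H).Reachable none x := by
    rintro (_ | a)
    · rfl
    · exact (cone_adj_none_some a).reachable
  exact fun x y => (hnone x).symm.trans (hnone y)

@[simp]
lemma cone_dist_none_some (a : W) : (cone H).dist none (some a) = 1 :=
  dist_eq_one_iff_adj.mpr (cone_adj_none_some a)

@[simp]
lemma cone_dist_some_none (a : W) : (cone H).dist (some a) none = 1 := by
  rw [dist_comm, cone_dist_none_some]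

lemma cone_dist_some_of_not_adj {a c : W} (hac : a ≠ c) (hn : ¬H.Adj a c) :
    (cone H).dist (some a) (some c) = 2 :=
  dist_eq_two_of_adj_of_adj (by simpa using hac) hn (cone_adj_none_some a).symm
    (cone_adj_none_some c)

lemma cone_dist_le_two (x y : Option W) : (cone H).dist x y ≤ 2 := by
  have hle : ∀ x, (cone H).dist none x ≤ 1 := by
    rintro (_ | a) <;> simp
  calc (cone H).dist x y ≤ (cone H).dist x none + (cone H).dist none y :=
        (cone_preconnected x none).dist_triangle_left y
    _ ≤ 1 + 1 := add_le_add (dist_comm (G := cone H) ▸ hle x) (hle y)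

lemma cone_eq_of_dist_eq_zero {x y : Option W} (h : (cone H).dist x y = 0) : x = y :=
  (cone_preconnected x y).dist_eq_zero_iff.mp h

lemma preimage_some_Sset_cone_subset {a b : W} (hab : a ≠ b) (hn : ¬H.Adj a b) :
    some ⁻¹' Sset (cone H) (some a) (some b) ⊆ some ⁻¹' Sset (cone H) none (some a) := by
  intro c hc
  simp only [Set.mem_preimage, mem_Sset_iff_dist cone_preconnected] at hc ⊢
  have hab2 := cone_dist_some_of_not_adj hab hn
  have hba2 : (cone H).dist (some b) (some a) = 2 := by rw [dist_comm, hab2]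
  have := cone_dist_le_two (H := H) (some a) (some c)
  have := cone_dist_le_two (H := H) (some b) (some c)
  rcases hc with hc | hc
  · obtain rfl : a = c := Option.some_injective _ (cone_eq_of_dist_eq_zero (H := H) (by omega))
    simp
  · obtain rfl : b = c := Option.some_injective _ (cone_eq_of_dist_eq_zero (H := H) (by omega))
    simp [hab2]

lemma exists_preimage_Sset_cone_subset (hH : ∀ a, ∃ b, b ≠ a ∧ ¬H.Adj a b) {x y : Option W}
    (hxy : x ≠ y) : ∃ a b : W, a ≠ b ∧
      some ⁻¹' Sset (cone H) (some a) (some b) ⊆ some ⁻¹' Sset (cone H) x y := by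
  rcases x with _ | a <;> rcases y with _ | b
  · exact absurd rfl hxy
  · obtain ⟨c, hcb, hn⟩ := hH b
    exact ⟨b, c, hcb.symm, preimage_some_Sset_cone_subset hcb.symm hn⟩
  · obtain ⟨c, hca, hn⟩ := hH a
    exact ⟨a, c, hca.symm, Sset_comm (G := cone H) none (some a) ▸
      preimage_some_Sset_cone_subset hca.symm hn⟩
  · exact ⟨a, b, fun h => hxy (h ▸ rfl), subset_rfl⟩

lemma preimage_some_Sset_cone_of_diam_le_two [Finite W] (hH : H.Connected) (hd : H.diam ≤ 2)
    (a b : W) : some ⁻¹' Sset (cone H) (some a) (some b) = Sset H a b := by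
  have hdist : ∀ x y, (cone H).dist (some x) (some y) = H.dist x y := by
    intro x y
    by_cases hxy : x = y
    · simp [hxy]
    by_cases hadj : H.Adj x y
    · rw [dist_eq_one_iff_adj.mpr hadj,
        dist_eq_one_iff_adj.mpr (show (cone H).Adj (some x) (some y) from hadj)]
    have := hH.one_lt_dist_of_ne_of_not_adj hxy hadj
    have : Nonempty W := hH.nonempty
    have := dist_le_diam (connected_iff_ediam_ne_top.mp hH) (u := x) (v := y)
    rw [cone_dist_some_of_not_adj hxy hadj]
    omega
  ext c
  simp only [Set.mem_preimage, mem_Sset_iff_dist cone_preconnected,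
    mem_Sset_iff_dist hH.preconnected, hdist]

end Cone

section LexProd

variable {V W : Type*} {G : SimpleGraph V} {H : SimpleGraph W}

lemma lexProd_adj_of_adj {u v : V} (h : G.Adj u v) (a c : W) :
    (lexProd G H).Adj (u, a) (v, c) :=
  Or.inl h

variable (G H) in
def lexProdLeft (c : W) : G →g lexProd G H where
  toFun v := (v, c)
  map_rel' := Or.inl

lemma exists_walk_length_le_of_lexProd_walk {x y : V × W} (P : (lexProd G H).Walk x y) :
    ∃ q : G.Walk x.1 y.1, q.length ≤ P.length := by
  induction P with
  | nil => exact ⟨.nil, le_rfl⟩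
  | cons h _ ih =>
    obtain ⟨q, hq⟩ := ih
    rcases h with h | ⟨h, -⟩
    · exact ⟨.cons h q, Nat.succ_le_succ hq⟩
    · exact ⟨q.copy h.symm rfl, (Walk.length_copy ..).trans_le (Nat.le_succ_of_le hq)⟩

lemma lexProd_preconnected [Nontrivial V] (hG : G.Preconnected) :
    (lexProd G H).Preconnected := by
  rintro ⟨u, a⟩ ⟨w, c⟩
  obtain ⟨v, huv⟩ := hG.exists_adj_of_nontrivial u
  exact (lexProd_adj_of_adj huv a c).reachable.trans ((hG v w).map (lexProdLeft G H c))

lemma lexProd_dist_of_ne (hG : G.Preconnected) {u w : V} (huw : u ≠ w) (a c : W) :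
    (lexProd G H).dist (u, a) (w, c) = G.dist u w := by
  obtain ⟨p, hp⟩ := (hG u w).exists_walk_length_eq_dist
  obtain ⟨v, huv, q, rfl⟩ := p.exists_eq_cons_of_ne huw
  let P : (lexProd G H).Walk (u, a) (w, c) :=
    .cons (lexProd_adj_of_adj huv a c) (q.map (lexProdLeft G H c))
  obtain ⟨Q, hQ⟩ := P.reachable.exists_walk_length_eq_dist
  obtain ⟨q', hq'⟩ := exists_walk_length_le_of_lexProd_walk Q
  have hP : (lexProd G H).dist (u, a) (w, c) ≤ q.length + 1 :=
    (dist_le P).trans_eq (congrArg (· + 1) (q.length_map _))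
  have hq'le : G.dist u w ≤ q'.length := dist_le q'
  rw [Walk.length_cons] at hp
  omega

lemma lexProd_dist_of_fst_eq {u : V} (hu : ∃ v, G.Adj u v) (a c : W) :
    (lexProd G H).dist (u, a) (u, c) = (cone H).dist (some a) (some c) := by
  by_cases hac : a = c
  · simp [hac]
  by_cases hadj : H.Adj a c
  · rw [dist_eq_one_iff_adj.mpr (show (lexProd G H).Adj (u, a) (u, c) from Or.inr ⟨rfl, hadj⟩),
      dist_eq_one_iff_adj.mpr (show (cone H).Adj (some a) (some c) from hadj)]
  obtain ⟨v, huv⟩ := hu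
  rw [cone_dist_some_of_not_adj hac hadj]
  refine dist_eq_two_of_adj_of_adj (by simpa using hac) ?_ (lexProd_adj_of_adj huv a a)
    (lexProd_adj_of_adj huv.symm a c)
  rintro (h | ⟨-, h⟩)
  exacts [G.irrefl h, hadj h]

lemma Sset_lexProd_subset [Nontrivial V] (hG : G.Preconnected) {u : V} {a b : W}
    (hab : a ≠ b) :
    Sset (lexProd G H) (u, a) (u, b) ⊆
      Prod.mk u '' (some ⁻¹' Sset (cone H) (some a) (some b)) := by
  rintro ⟨w, c⟩ hz
  rw [mem_Sset_iff_dist (lexProd_preconnected hG)] at hz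
  have hfst := lexProd_dist_of_fst_eq (H := H) (hG.exists_adj_of_nontrivial u)
  by_cases hwu : w = u
  · subst hwu
    refine ⟨c, ?_, rfl⟩
    rw [Set.mem_preimage, mem_Sset_iff_dist cone_preconnected]
    simpa only [hfst] using hz
  · have hab0 : (cone H).dist (some a) (some b) ≠ 0 := fun h =>
      hab (Option.some_injective _ (cone_eq_of_dist_eq_zero h))
    rw [lexProd_dist_of_ne hG (Ne.symm hwu), lexProd_dist_of_ne hG (Ne.symm hwu), hfst, hfst,
      dist_comm (u := some b)] at hz
    omega

lemma one_le_finsum_slice [Finite V] [Finite W] [Nontrivial V] (hG : G.Preconnected)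
    {g : V × W → ℝ} (hg : IsSRF (lexProd G H) g) (u : V) {a b : W} (hab : a ≠ b) :
    1 ≤ ∑ᶠ c ∈ some ⁻¹' Sset (cone H) (some a) (some b), g (u, c) :=
  calc 1 ≤ ∑ᶠ z ∈ Sset (lexProd G H) (u, a) (u, b), g z := hg.2 _ _ (by simpa using hab)
    _ ≤ ∑ᶠ z ∈ Prod.mk u '' (some ⁻¹' Sset (cone H) (some a) (some b)), g z :=
        finsum_mem_mono_of_nonneg (fun z => (hg.1 z).1) (Sset_lexProd_subset hG hab)
    _ = _ := finsum_mem_image (Prod.mk_right_injective u).injOn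

end LexProd

lemma exists_ne_not_adj_of_two_lt_diam {W : Type*} {H : SimpleGraph W} (hd : 2 < H.diam)
    (a : W) : ∃ b, b ≠ a ∧ ¬H.Adj a b := by
  by_contra! hadj
  have hle : ∀ x, H.edist x a ≤ 1 := fun x =>
    edist_le_one_iff_adj_or_eq.mpr <| (em (x = a)).symm.imp_left fun hx => (hadj x hx).symm
  have hediam : H.ediam ≤ (2 : ℕ) := ediam_le_of_edist_le fun x y =>
    calc H.edist x y ≤ H.edist x a + H.edist a y := H.edist_triangle
      _ ≤ 1 + 1 := add_le_add (hle x) (SimpleGraph.edist_comm ▸ hle y)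
      _ = (2 : ℕ) := by norm_num
  exact absurd (ENat.toNat_le_of_le_natCast hediam) hd.not_ge

section Slice

variable {V W : Type*} {G : SimpleGraph V} {H : SimpleGraph W} [Finite V] [Nontrivial V]
  {g : V × W → ℝ}

lemma isSRF_slice_of_diam_le_two [Finite W] (hG : G.Preconnected) (hH : H.Connected)
    (hd : H.diam ≤ 2) (hg : IsSRF (lexProd G H) g) (u : V) : IsSRF H fun c => g (u, c) :=
  ⟨fun c => hg.1 (u, c), fun a b hab =>
    preimage_some_Sset_cone_of_diam_le_two hH hd a b ▸ one_le_finsum_slice hG hg u hab⟩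

lemma isSRF_cone_slice [Finite W] (hG : G.Preconnected) (hH : ∀ a, ∃ b, b ≠ a ∧ ¬H.Adj a b)
    (hg : IsSRF (lexProd G H) g) (u : V) :
    IsSRF (cone H) fun o => o.elim 0 fun c => g (u, c) := by
  set f : Option W → ℝ := fun o => o.elim 0 fun c => g (u, c)
  have hf : 0 ≤ f := by rintro (_ | c); exacts [le_rfl, (hg.1 (u, c)).1]
  refine ⟨by rintro (_ | c); exacts [⟨le_rfl, zero_le_one⟩, hg.1 (u, c)], fun x y hxy => ?_⟩
  obtain ⟨a, b, hab, hsub⟩ := exists_preimage_Sset_cone_subset hH hxy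
  calc 1 ≤ ∑ᶠ c ∈ some ⁻¹' Sset (cone H) (some a) (some b), g (u, c) :=
        one_le_finsum_slice hG hg u hab
    _ ≤ ∑ᶠ c ∈ some ⁻¹' Sset (cone H) x y, f (some c) :=
        finsum_mem_mono_of_nonneg (fun c => hf (some c)) hsub
    _ = ∑ᶠ z ∈ some '' (some ⁻¹' Sset (cone H) x y), f z :=
        (finsum_mem_image (Option.some_injective _).injOn).symm
    _ ≤ ∑ᶠ z ∈ Sset (cone H) x y, f z :=
        finsum_mem_mono_of_nonneg hf (Set.image_preimage_subset _ _)

lemma card_div_two_le_sum_slice [Fintype W] (hG : G.Preconnected)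
    (hcase : (H.Connected ∧ H.diam ≤ 2 ∧ sdimf H = (Fintype.card W : ℝ) / 2) ∨
      (2 < H.diam ∧ sdimf (cone H) = (Fintype.card W : ℝ) / 2))
    (hg : IsSRF (lexProd G H) g) (u : V) :
    (Fintype.card W : ℝ) / 2 ≤ ∑ c, g (u, c) := by
  rcases hcase with ⟨hH, hd, hs⟩ | ⟨hd, hs⟩
  · calc _ = sdimf H := hs.symm
      _ ≤ ∑ᶠ c, g (u, c) := sdimf_le_finsum (isSRF_slice_of_diam_le_two hG hH hd hg u)
      _ = _ := finsum_eq_sum_of_fintype _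
  · calc _ = sdimf (cone H) := hs.symm
      _ ≤ ∑ᶠ o : Option W, o.elim 0 fun c => g (u, c) :=
        sdimf_le_finsum (g := fun o : Option W => o.elim 0 fun c => g (u, c))
          (isSRF_cone_slice hG (exists_ne_not_adj_of_two_lt_diam hd) hg u)
      _ = _ := by rw [finsum_eq_sum_of_fintype, Fintype.sum_option]; simp

end Slice

theorem sdimf_lexProd_eq_half_general {V W : Type*} [Fintype V] [Fintype W]
    (G : SimpleGraph V) (H : SimpleGraph W)
    (hG : G.Connected) (hn : 2 ≤ Fintype.card V)
    (hcase :
      (H.Connected ∧ H.diam ≤ 2 ∧ sdimf H = (Fintype.card W : ℝ) / 2) ∨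
      (2 < H.diam ∧ sdimf (cone H) = (Fintype.card W : ℝ) / 2)) :
    sdimf (lexProd G H) = (Fintype.card V : ℝ) * (Fintype.card W : ℝ) / 2 := by
  have : Nontrivial V := Fintype.one_lt_card_iff_nontrivial.mp hn
  refine IsLeast.csInf_eq ⟨⟨_, isSRF_const_half (lexProd_preconnected hG.preconnected), ?_⟩, ?_⟩
  · rw [finsum_eq_sum_of_fintype, Finset.sum_const, Finset.card_univ, Fintype.card_prod,
      nsmul_eq_mul]
    push_cast
    ring
  · rintro s ⟨g, hg, rfl⟩
    calc (Fintype.card V : ℝ) * (Fintype.card W : ℝ) / 2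
          = ∑ _u : V, (Fintype.card W : ℝ) / 2 := by
            rw [Finset.sum_const, Finset.card_univ, nsmul_eq_mul]; ring
      _ ≤ ∑ u, ∑ c, g (u, c) := Finset.sum_le_sum fun u _ =>
          card_div_two_le_sum_slice hG.preconnected hcase hg u
      _ = ∑ᶠ z, g z := by rw [finsum_eq_sum_of_fintype, Fintype.sum_prod_type]

/-- Let `G` and `H` each have order at least two, with `G` connected.
If either (i) `H` is connected with `diam(H) ≤ 2` and `sdim_f(H) = |V(H)|/2`, or
(ii) `diam(H) > 2` and `sdim_f(K₁ ⊙ H) = |V(H)|/2`, then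
`sdim_f(G[H]) = |V(G)|·|V(H)|/2`. -/
theorem sdimf_lexProd_eq_half {V W : Type*} [Fintype V] [Fintype W]
    (G : SimpleGraph V) (H : SimpleGraph W)
    (hG : G.Connected) (hn : 2 ≤ Fintype.card V) (hm : 2 ≤ Fintype.card W)
    (hcase :
      (H.Connected ∧ H.diam ≤ 2 ∧ sdimf H = (Fintype.card W : ℝ) / 2) ∨
      (2 < H.diam ∧ sdimf (cone H) = (Fintype.card W : ℝ) / 2)) :
    sdimf (lexProd G H) = (Fintype.card V : ℝ) * (Fintype.card W : ℝ) / 2 :=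
  sdimf_lexProd_eq_half_general G H hG hn hcase
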